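/- Tails do not modify existing store locations: for every tail Q (a sequence of calls to top-level functions whose parameters are side-effect-free expressions, possibly with one nested call as last argument), if Q, s ⇓_{ρ, F} v, s' under the naive semantics for lambda-lifted programs, then s ⊑ s', i.e. s'|_{dom(s)} = s. -/

import Mathlib

/-! Lambda-lifted code has a frame property: evaluating a letrec-free term under `ρ`
leaves every existing location outside the image of `ρ` untouched, i.e.
`StoreLe (clean ρ s) s'`. Assignments write only to `ρ`-locations, and a function body
runs under its own parameter frame (closures capture the empty environment), whose
locations are fresh. In a tail the arguments of a call are expressions, which do not touch
the store, or a nested call, so every write goes to a fresh frame and the store before the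
tail is preserved. -/

namespace CPC

abbrev Loc := Nat
abbrev Var := String

inductive Val : Type
  | unit | tt | ff
  | nat (n : Nat)
deriving DecidableEq

inductive Tm : Type
  | val (v : Val)
  | var (x : Var)
  | assign (x : Var) (t : Tm)
  | ite (c t e : Tm)
  | seq (a b : Tm)
  | letrec (f : Var) (ps : List Var) (body rest : Tm)
  | call (f : Var) (args : List Tm)

abbrev Env := Var → Option Loc
abbrev Store := Loc → Option Val

def emptyEnv : Env := fun _ => none
def emptyStore : Store := fun _ => none

/-- Modification (extension) of a partial function. -/
def updFn {α β : Type} [DecidableEq α] (f : α → Option β) (x : α) (y : β) :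
    α → Option β :=
  fun t => if t = x then some y else f t

/-- Concatenation of environments: leftmost binding wins. -/
def envCat (ρ₁ ρ₂ : Env) : Env := fun x => (ρ₁ x).orElse (fun _ => ρ₂ x)

def single (x : Var) (l : Loc) : Env := updFn emptyEnv x l

def envIm (ρ : Env) : Set Loc := {l | ∃ x, ρ x = some l}
def envDom (ρ : Env) : Set Var := {x | ρ x ≠ none}
def storeDom (s : Store) : Set Loc := {l | s l ≠ none}

open Classical in
/-- Cleaning of a store with respect to an environment. -/
noncomputable def clean (ρ : Env) (s : Store) : Store :=
  fun l => if l ∈ envIm ρ then none else s l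

open Classical in
/-- Restriction of a store to a set of locations. -/
noncomputable def resStore (s : Store) (D : Set Loc) : Store :=
  fun l => if l ∈ D then s l else none

/-- Store extension: `t` agrees with `s` on `dom s`. -/
def StoreLe (s t : Store) : Prop := ∀ l ∈ storeDom s, t l = s l

/-- Environment binding a list of variables to a list of locations. -/
def envOf (xs : List Var) (ls : List Loc) : Env := fun y => (xs.zip ls).lookup y

/-- Store updated with a list of locations bound to a list of values. -/
def updStore (s : Store) (ls : List Loc) (vs : List Val) : Store :=
  fun l => ((ls.zip vs).lookup l).orElse (fun _ => s l)

/-- Closures: parameters, body, captured variable environment,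
    captured function environment. -/
inductive Clos : Type
  | mk (ps : List Var) (body : Tm) (ρ : Env) (F : List (Var × Clos))

abbrev FEnv := List (Var × Clos)

def lookupF (F : FEnv) (f : Var) : Option Clos := F.lookup f

/-- `LocIn l F`: the location `l` appears in `F`
    (in some environment captured, recursively, in a closure of `F`). -/
inductive LocIn : Loc → FEnv → Prop
  | env {l : Loc} {F : FEnv} {f ps body ρ F'} :
      (f, Clos.mk ps body ρ F') ∈ F → l ∈ envIm ρ → LocIn l F
  | deep {l : Loc} {F : FEnv} {f ps body ρ F'} :
      (f, Clos.mk ps body ρ F') ∈ F → LocIn l F' → LocIn l F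

/-! ### Naive big-step reduction rules (with derivation height) -/

mutual
inductive EvalN : Nat → Env → FEnv → Tm → Store → Val → Store → Prop
  | val {ρ : Env} {F : FEnv} {v s} : EvalN 1 ρ F (.val v) s v s
  | var {ρ : Env} {F : FEnv} {x l s w} :
      ρ x = some l → s l = some w → EvalN 1 ρ F (.var x) s w s
  | assign {n} {ρ : Env} {F : FEnv} {a s v s' x l} :
      EvalN n ρ F a s v s' → ρ x = some l → l ∈ storeDom s' →
      EvalN (n+1) ρ F (.assign x a) s .unit (updFn s' l v)
  | seq {n m} {ρ : Env} {F : FEnv} {a b s v s' v' s''} :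
      EvalN n ρ F a s v s' → EvalN m ρ F b s' v' s'' →
      EvalN (n+m+1) ρ F (.seq a b) s v' s''
  | ifT {n m} {ρ : Env} {F : FEnv} {c b e s s' v s''} :
      EvalN n ρ F c s .tt s' → EvalN m ρ F b s' v s'' →
      EvalN (n+m+1) ρ F (.ite c b e) s v s''
  | ifF {n m} {ρ : Env} {F : FEnv} {c b e s s' v s''} :
      EvalN n ρ F c s .ff s' → EvalN m ρ F e s' v s'' →
      EvalN (n+m+1) ρ F (.ite c b e) s v s''
  | letrec {n} {ρ : Env} {F : FEnv} {f ps a b s v s'} :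
      EvalN n ρ ((f, Clos.mk ps a ρ F) :: F) b s v s' →
      EvalN (n+1) ρ F (.letrec f ps a b) s v s'
  | call {n m} {ρ : Env} {F : FEnv} {f args s₁ vs s₂ xs b} {ρ' : Env} {F' : FEnv}
      {ls : List Loc} {v s'} :
      lookupF F f = some (Clos.mk xs b ρ' F') →
      EvalNArgs n ρ F args s₁ vs s₂ →
      ls.length = xs.length → vs.length = xs.length → ls.Nodup →
      (∀ l ∈ ls, l ∉ storeDom s₂ ∧ ¬ LocIn l ((f, Clos.mk xs b ρ' F') :: F')) →
      EvalN m (envCat (envOf xs ls) ρ') ((f, Clos.mk xs b ρ' F') :: F')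
        b (updStore s₂ ls vs) v s' →
      EvalN (n+m+1) ρ F (.call f args) s₁ v s'

inductive EvalNArgs : Nat → Env → FEnv → List Tm → Store → List Val → Store → Prop
  | nil {ρ : Env} {F : FEnv} {s} : EvalNArgs 0 ρ F [] s [] s
  | cons {n m} {ρ : Env} {F : FEnv} {a as s v s' vs s''} :
      EvalN n ρ F a s v s' → EvalNArgs m ρ F as s' vs s'' →
      EvalNArgs (n+m) ρ F (a :: as) s (v :: vs) s''
end

/-! ### Intermediate big-step reduction rules (split environments,
      minimal stores, non-compact closures) -/

mutual
inductive EvalI : Nat → Env → Env → FEnv → Tm → Store → Val → Store → Prop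
  | val {ρT ρ : Env} {F : FEnv} {v s} :
      EvalI 1 ρT ρ F (.val v) s v (clean ρT s)
  | var {ρT ρ : Env} {F : FEnv} {x l s w} :
      envCat ρT ρ x = some l → s l = some w →
      EvalI 1 ρT ρ F (.var x) s w (clean ρT s)
  | assign {n} {ρT ρ : Env} {F : FEnv} {a s v s' x l} :
      EvalI n emptyEnv (envCat ρT ρ) F a s v s' →
      envCat ρT ρ x = some l → l ∈ storeDom s' →
      EvalI (n+1) ρT ρ F (.assign x a) s .unit (clean ρT (updFn s' l v))
  | seq {n m} {ρT ρ : Env} {F : FEnv} {a b s v s' v' s''} :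
      EvalI n emptyEnv (envCat ρT ρ) F a s v s' → EvalI m ρT ρ F b s' v' s'' →
      EvalI (n+m+1) ρT ρ F (.seq a b) s v' s''
  | ifT {n m} {ρT ρ : Env} {F : FEnv} {c b e s s' v s''} :
      EvalI n emptyEnv (envCat ρT ρ) F c s .tt s' → EvalI m ρT ρ F b s' v s'' →
      EvalI (n+m+1) ρT ρ F (.ite c b e) s v s''
  | ifF {n m} {ρT ρ : Env} {F : FEnv} {c b e s s' v s''} :
      EvalI n emptyEnv (envCat ρT ρ) F c s .ff s' → EvalI m ρT ρ F e s' v s'' →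
      EvalI (n+m+1) ρT ρ F (.ite c b e) s v s''
  | letrec {n} {ρT ρ : Env} {F : FEnv} {f ps a b s v s'} :
      EvalI n ρT ρ ((f, Clos.mk ps a (envCat ρT ρ) F) :: F) b s v s' →
      EvalI (n+1) ρT ρ F (.letrec f ps a b) s v s'
  | call {n m} {ρT ρ : Env} {F : FEnv} {f args s₁ vs s₂ xs b} {ρ' : Env} {F' : FEnv}
      {ls : List Loc} {v s'} :
      lookupF F f = some (Clos.mk xs b ρ' F') →
      EvalIArgs n (envCat ρT ρ) F args s₁ vs s₂ →
      ls.length = xs.length → vs.length = xs.length → ls.Nodup →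
      (∀ l ∈ ls, l ∉ storeDom s₂ ∧ ¬ LocIn l ((f, Clos.mk xs b ρ' F') :: F')) →
      EvalI m (envOf xs ls) ρ' ((f, Clos.mk xs b ρ' F') :: F')
        b (updStore s₂ ls vs) v s' →
      EvalI (n+m+1) ρT ρ F (.call f args) s₁ v (clean ρT s')

inductive EvalIArgs : Nat → Env → FEnv → List Tm → Store → List Val → Store → Prop
  | nil {ρ : Env} {F : FEnv} {s} : EvalIArgs 0 ρ F [] s [] s
  | cons {n m} {ρ : Env} {F : FEnv} {a as s v s' vs s''} :
      EvalI n emptyEnv ρ F a s v s' → EvalIArgs m ρ F as s' vs s'' →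
      EvalIArgs (n+m) ρ F (a :: as) s (v :: vs) s''
end

/-- Restriction of an environment outside a list of variables. -/
def restrictEnv (ρ : Env) (ps : List Var) : Env :=
  fun x => if x ∈ ps then none else ρ x

/-! ### Optimised big-step reduction rules (minimal stores and compact
      closures): identical to the intermediate rules except that the
      (letrec) rule builds compact closures -/

mutual
inductive EvalO : Nat → Env → Env → FEnv → Tm → Store → Val → Store → Prop
  | val {ρT ρ : Env} {F : FEnv} {v s} :
      EvalO 1 ρT ρ F (.val v) s v (clean ρT s)
  | var {ρT ρ : Env} {F : FEnv} {x l s w} :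
      envCat ρT ρ x = some l → s l = some w →
      EvalO 1 ρT ρ F (.var x) s w (clean ρT s)
  | assign {n} {ρT ρ : Env} {F : FEnv} {a s v s' x l} :
      EvalO n emptyEnv (envCat ρT ρ) F a s v s' →
      envCat ρT ρ x = some l → l ∈ storeDom s' →
      EvalO (n+1) ρT ρ F (.assign x a) s .unit (clean ρT (updFn s' l v))
  | seq {n m} {ρT ρ : Env} {F : FEnv} {a b s v s' v' s''} :
      EvalO n emptyEnv (envCat ρT ρ) F a s v s' → EvalO m ρT ρ F b s' v' s'' →
      EvalO (n+m+1) ρT ρ F (.seq a b) s v' s''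
  | ifT {n m} {ρT ρ : Env} {F : FEnv} {c b e s s' v s''} :
      EvalO n emptyEnv (envCat ρT ρ) F c s .tt s' → EvalO m ρT ρ F b s' v s'' →
      EvalO (n+m+1) ρT ρ F (.ite c b e) s v s''
  | ifF {n m} {ρT ρ : Env} {F : FEnv} {c b e s s' v s''} :
      EvalO n emptyEnv (envCat ρT ρ) F c s .ff s' → EvalO m ρT ρ F e s' v s'' →
      EvalO (n+m+1) ρT ρ F (.ite c b e) s v s''
  | letrec {n} {ρT ρ : Env} {F : FEnv} {f ps a b s v s'} :
      EvalO n ρT ρ ((f, Clos.mk ps a (restrictEnv (envCat ρT ρ) ps) F) :: F) b s v s' →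
      EvalO (n+1) ρT ρ F (.letrec f ps a b) s v s'
  | call {n m} {ρT ρ : Env} {F : FEnv} {f args s₁ vs s₂ xs b} {ρ' : Env} {F' : FEnv}
      {ls : List Loc} {v s'} :
      lookupF F f = some (Clos.mk xs b ρ' F') →
      EvalOArgs n (envCat ρT ρ) F args s₁ vs s₂ →
      ls.length = xs.length → vs.length = xs.length → ls.Nodup →
      (∀ l ∈ ls, l ∉ storeDom s₂ ∧ ¬ LocIn l ((f, Clos.mk xs b ρ' F') :: F')) →
      EvalO m (envOf xs ls) ρ' ((f, Clos.mk xs b ρ' F') :: F')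
        b (updStore s₂ ls vs) v s' →
      EvalO (n+m+1) ρT ρ F (.call f args) s₁ v (clean ρT s')

inductive EvalOArgs : Nat → Env → FEnv → List Tm → Store → List Val → Store → Prop
  | nil {ρ : Env} {F : FEnv} {s} : EvalOArgs 0 ρ F [] s [] s
  | cons {n m} {ρ : Env} {F : FEnv} {a as s v s' vs s''} :
      EvalO n emptyEnv ρ F a s v s' → EvalOArgs m ρ F as s' vs s'' →
      EvalOArgs (n+m) ρ F (a :: as) s (v :: vs) s''
end


/-- Lambda-lifted terms contain no `letrec` construct. -/
inductive NoLetrec : Tm → Prop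
  | val {v} : NoLetrec (.val v)
  | var {x} : NoLetrec (.var x)
  | assign {x t} : NoLetrec t → NoLetrec (.assign x t)
  | ite {c t e} : NoLetrec c → NoLetrec t → NoLetrec e → NoLetrec (.ite c t e)
  | seq {a b} : NoLetrec a → NoLetrec b → NoLetrec (.seq a b)
  | call {f args} : (∀ a ∈ args, NoLetrec a) → NoLetrec (.call f args)

mutual
/-- A closure of a lambda-lifted program: it captures the empty variable
environment and its body is letrec-free. -/
inductive ClosLifted : Clos → Prop
  | mk {ps b F} : NoLetrec b → FLifted F → ClosLifted (.mk ps b emptyEnv F)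

/-- A function environment of a lambda-lifted program. -/
inductive FLifted : FEnv → Prop
  | nil : FLifted []
  | cons {f c F} : ClosLifted c → FLifted F → FLifted ((f, c) :: F)
end
/-- Expressions: values or variables. -/
inductive IsExpr : Tm → Prop
  | val {v} : IsExpr (.val v)
  | var {x} : IsExpr (.var x)

/-- Nested function calls `F̂ ::= f(e,…,e) | f(e,…,e,F̂)`. -/
inductive NCall : Tm → Prop
  | base {f args} : (∀ a ∈ args, IsExpr a) → NCall (.call f args)
  | nest {f args F} : (∀ a ∈ args, IsExpr a) → NCall F →
      NCall (.call f (args ++ [F]))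

/-- Tails `Q ::= ε | Q ; F̂`. -/
inductive IsTail : Tm → Prop
  | eps : IsTail (.val .unit)
  | seq {Q F} : IsTail Q → NCall F → IsTail (.seq Q F)

theorem _root_.List.mem_of_lookup_eq_some {α β : Type*} [BEq α] [LawfulBEq α]
    {l : List (α × β)} {k : α} {b : β} (h : l.lookup k = some b) : (k, b) ∈ l := by
  obtain ⟨l₁, l₂, rfl, -⟩ := List.lookup_eq_some_iff.mp h
  simp

theorem envCat_emptyEnv (ρ : Env) : envCat ρ emptyEnv = ρ := by
  funext x
  show (ρ x).orElse _ = ρ x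
  cases ρ x <;> rfl

theorem mem_of_mem_envIm_envOf {xs : List Var} {ls : List Loc} {l : Loc}
    (hl : l ∈ envIm (envOf xs ls)) : l ∈ ls := by
  obtain ⟨x, hx⟩ := hl
  exact (List.of_mem_zip (List.mem_of_lookup_eq_some hx)).2

theorem updStore_of_notMem {s : Store} {ls : List Loc} {l : Loc} (vs : List Val)
    (hl : l ∉ ls) : updStore s ls vs l = s l := by
  have hnone : (ls.zip vs).lookup l = none := by
    refine List.lookup_eq_none_iff.mpr fun ⟨k, w⟩ hkw => ?_
    have hk : k ≠ l := by rintro rfl; exact hl (List.of_mem_zip hkw).1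
    simpa using Ne.symm hk
  simp [updStore, hnone]

namespace StoreLe

theorem refl (s : Store) : StoreLe s s := fun _ _ => rfl

theorem trans {s t u : Store} (hst : StoreLe s t) (htu : StoreLe t u) : StoreLe s u := by
  intro l hl
  have hlt : l ∈ storeDom t := by
    change t l ≠ none
    rwa [hst l hl]
  rw [htu l hlt, hst l hl]

theorem updFn_of_notMem {s t : Store} {l : Loc} (v : Val) (h : StoreLe s t)
    (hl : l ∉ storeDom s) : StoreLe s (updFn t l v) := by
  intro k hk
  have hkl : k ≠ l := by rintro rfl; exact hl hk
  simp [updFn, hkl, h k hk]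

end StoreLe

theorem notMem_storeDom_clean {ρ : Env} {l : Loc} (s : Store) (hl : l ∈ envIm ρ) :
    l ∉ storeDom (clean ρ s) := by
  simp [storeDom, clean, hl]

theorem clean_storeLe (ρ : Env) (s : Store) : StoreLe (clean ρ s) s := by
  intro l hl
  by_cases hρ : l ∈ envIm ρ
  · exact absurd hl (notMem_storeDom_clean s hρ)
  · simp [clean, hρ]

theorem StoreLe.clean_right {ρ : Env} {s t : Store} (h : StoreLe (clean ρ s) t) :
    StoreLe (clean ρ s) (clean ρ t) := by
  intro l hl
  by_cases hρ : l ∈ envIm ρ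
  · exact absurd hl (notMem_storeDom_clean s hρ)
  · rw [show clean ρ t l = t l from if_neg hρ]
    exact h l hl

theorem storeLe_clean_updStore_of_fresh {s : Store} {xs : List Var} {ls : List Loc}
    (vs : List Val) (hfresh : ∀ l ∈ ls, l ∉ storeDom s) :
    StoreLe s (clean (envOf xs ls) (updStore s ls vs)) := by
  intro l hl
  have hls : l ∉ ls := fun h => hfresh l h hl
  have hρ : l ∉ envIm (envOf xs ls) := fun h => hls (mem_of_mem_envIm_envOf h)
  simp [clean, hρ, updStore_of_notMem vs hls]

theorem FLifted.closLifted_of_mem {F : FEnv} (hF : FLifted F) {p : Var × Clos}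
    (hp : p ∈ F) : ClosLifted p.2 := by
  induction F with
  | nil => cases hp
  | cons q F ih =>
    cases hF with
    | cons hq hF =>
      rcases List.mem_cons.mp hp with rfl | hp
      · exact hq
      · exact ih hF hp

theorem FLifted.closLifted_of_lookupF {F : FEnv} (hF : FLifted F) {f : Var} {c : Clos}
    (h : lookupF F f = some c) : ClosLifted c :=
  hF.closLifted_of_mem (List.mem_of_lookup_eq_some h)

theorem storeLe_of_lifted_call {F F' : FEnv} {f : Var} {xs : List Var} {b : Tm} {ρ' : Env}
    {ls : List Loc} {vs : List Val} {s s' : Store} (hF : FLifted F)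
    (hlook : lookupF F f = some (Clos.mk xs b ρ' F')) (hfresh : ∀ l ∈ ls, l ∉ storeDom s)
    (hbody : NoLetrec b → FLifted ((f, Clos.mk xs b ρ' F') :: F') →
      StoreLe (clean (envCat (envOf xs ls) ρ') (updStore s ls vs)) s') :
    StoreLe s s' := by
  have hc := hF.closLifted_of_lookupF hlook
  cases hc with
  | mk hb hF' =>
    rw [envCat_emptyEnv] at hbody
    exact (storeLe_clean_updStore_of_fresh vs hfresh).trans
      (hbody hb (.cons (.mk hb hF') hF'))

mutual

theorem EvalN.storeLe_clean {n : Nat} {ρ : Env} {F : FEnv} {t : Tm} {s s' : Store} {v : Val}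
    (h : EvalN n ρ F t s v s') (ht : NoLetrec t) (hF : FLifted F) :
    StoreLe (clean ρ s) s' :=
  match h, ht with
  | .val, _ | .var _ _, _ => clean_storeLe ρ s
  | .assign ha hx _, .assign ht =>
    (ha.storeLe_clean ht hF).updFn_of_notMem _ (notMem_storeDom_clean _ ⟨_, hx⟩)
  | .seq ha hb, .seq hta htb =>
    (ha.storeLe_clean hta hF).clean_right.trans (hb.storeLe_clean htb hF)
  | .ifT hc hb, .ite htc htb _ =>
    (hc.storeLe_clean htc hF).clean_right.trans (hb.storeLe_clean htb hF)
  | .ifF hc he, .ite htc _ hte =>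
    (hc.storeLe_clean htc hF).clean_right.trans (he.storeLe_clean hte hF)
  | .call hlook hargs _ _ _ hfresh hbody, .call hts =>
    (hargs.storeLe_clean hts hF).trans <| storeLe_of_lifted_call hF hlook
      (fun l hl => (hfresh l hl).1) fun hb hF' => hbody.storeLe_clean hb hF'

theorem EvalNArgs.storeLe_clean {n : Nat} {ρ : Env} {F : FEnv} {ts : List Tm} {s s' : Store}
    {vs : List Val} (h : EvalNArgs n ρ F ts s vs s') (hts : ∀ t ∈ ts, NoLetrec t)
    (hF : FLifted F) : StoreLe (clean ρ s) s' :=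
  match h with
  | .nil => clean_storeLe ρ s
  | .cons ha has =>
    (ha.storeLe_clean (hts _ List.mem_cons_self) hF).clean_right.trans
      (has.storeLe_clean (fun t ht => hts t (List.mem_cons_of_mem _ ht)) hF)

end

theorem EvalN.eq_of_isExpr {n : Nat} {ρ : Env} {F : FEnv} {t : Tm} {s s' : Store} {v : Val}
    (h : EvalN n ρ F t s v s') (ht : IsExpr t) : s' = s := by
  cases ht <;> cases h <;> rfl

theorem NCall.isExpr_or_nCall_of_mem {f : Var} {args : List Tm} (h : NCall (.call f args))
    {a : Tm} (ha : a ∈ args) : IsExpr a ∨ NCall a := by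
  cases h with
  | base he => exact .inl (he a ha)
  | nest he hc =>
    rcases List.mem_append.mp ha with ha | ha
    · exact .inl (he a ha)
    · exact .inr (List.mem_singleton.mp ha ▸ hc)

mutual

theorem EvalN.storeLe_of_nCall {n : Nat} {ρ : Env} {F : FEnv} {t : Tm} {s s' : Store}
    {v : Val} (h : EvalN n ρ F t s v s') (ht : NCall t) (hF : FLifted F) : StoreLe s s' :=
  match h with
  | .call hlook hargs _ _ _ hfresh hbody =>
    (hargs.storeLe_of_isExpr_or_nCall (fun _ => ht.isExpr_or_nCall_of_mem) hF).trans <|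
      storeLe_of_lifted_call hF hlook (fun l hl => (hfresh l hl).1)
        fun hb hF' => hbody.storeLe_clean hb hF'
  | .val | .var _ _ | .assign _ _ _ | .seq _ _ | .ifT _ _ | .ifF _ _ | .letrec _ => nomatch ht

theorem EvalNArgs.storeLe_of_isExpr_or_nCall {n : Nat} {ρ : Env} {F : FEnv} {ts : List Tm}
    {s s' : Store} {vs : List Val} (h : EvalNArgs n ρ F ts s vs s')
    (hts : ∀ t ∈ ts, IsExpr t ∨ NCall t) (hF : FLifted F) : StoreLe s s' :=
  match h with
  | .nil => StoreLe.refl s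
  | .cons ha has =>
    have hrest :=
      has.storeLe_of_isExpr_or_nCall (fun t ht => hts t (List.mem_cons_of_mem _ ht)) hF
    match hts _ List.mem_cons_self with
    | .inl he => ha.eq_of_isExpr he ▸ hrest
    | .inr hc => (ha.storeLe_of_nCall hc hF).trans hrest

end

/-- tails do not modify existing store locations. -/
theorem tail_store_extension
    {n : Nat} {ρ : Env} {F : FEnv} {Q : Tm} {s s' : Store} {v : Val}
    (hQ : IsTail Q) (hF : FLifted F)
    (h : EvalN n ρ F Q s v s') :
    StoreLe s s' := by
  induction hQ generalizing n s s' v with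
  | eps =>
    cases h
    exact StoreLe.refl s
  | seq _ hC ih =>
    cases h with
    | seq hq hc => exact (ih hq).trans (hc.storeLe_of_nCall hC hF)

end CPC
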